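/- Let S and T be nonempty finite types, let w and y be positive natural numbers, and let U : Matrix S S ℝ, Z : Matrix T T ℝ, W : Fin w → Matrix S T ℝ, Y : Fin y → Matrix T S ℝ, all with nonnegative entries. Let M = Matrix.fromBlocks U (∑ i, W i) (∑ j, Y j) Z, indexed by S ⊕ T, and let M̂ be the evolved matrix indexed by S ⊕ ((Fin w × Fin y) × T) with blocks M̂ (inl s) (inl s') = U s s', M̂ (inl s) (inr ((i,j), t)) = W i s t, M̂ (inr ((i,j), t)) (inl s) = Y j t s, and M̂ (inr ((i,j), t)) (inr ((i',j'), t')) = if (i,j) = (i',j') then Z t t' else 0. Suppose r ∈ ℝ satisfies r > ρ(Z) (the spectral radius of Z), and p : S ⊕ T → ℝ is an entrywise nonnegative vector with M *ᵥ p = r • p. Then there exists an entrywise nonnegative vector q on S ⊕ ((Fin w × Fin y) × T) with M̂ *ᵥ q = r • q and q ∘ Sum.inl = p ∘ Sum.inl. That is, the eigenvector centrality of the core vertices S is preserved under the evolution. -/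

import Mathlib

open Matrix

/-- The spectral radius of a square real matrix: the maximum of `|μ|` over the
complex roots `μ` of its characteristic polynomial. -/
noncomputable def specRad {n : Type*} [Fintype n] [DecidableEq n]
    (A : Matrix n n ℝ) : ℝ :=
  ((A.charpoly.map (algebraMap ℝ ℂ)).roots.map (fun z : ℂ => ‖z‖)).fold max 0

private lemma fold_max_nonneg (m : Multiset ℝ) : 0 ≤ m.fold max 0 := by
  induction m using Multiset.induction_on with
  | empty => simp
  | cons a s ih => rw [Multiset.fold_cons_left]; exact le_max_of_le_right ih

private lemma le_fold_max {m : Multiset ℝ} {a : ℝ} (h : a ∈ m) : a ≤ m.fold max 0 := by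
  induction m using Multiset.induction_on with
  | empty => simp at h
  | cons b s ih =>
    rw [Multiset.fold_cons_left]
    rcases Multiset.mem_cons.mp h with h | h
    · exact h ▸ le_max_left _ _
    · exact le_max_of_le_right (ih h)

private lemma charpoly_eval' {n : Type*} [Fintype n] [DecidableEq n]
    (M : Matrix n n ℝ) (x : ℝ) :
    M.charpoly.eval x = (x • (1 : Matrix n n ℝ) - M).det := by
  rw [Matrix.charpoly, ← Polynomial.coe_evalRingHom, RingHom.map_det]
  congr 1
  ext i j
  by_cases h : i = j
  · subst h; simp [Matrix.charmatrix_apply, Matrix.one_apply, Matrix.diagonal_apply]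
  · simp [Matrix.charmatrix_apply, Matrix.one_apply_ne h, Matrix.diagonal_apply, h]

private lemma det_ne_zero_of_specRad_lt {n : Type*} [Fintype n] [DecidableEq n]
    {Z : Matrix n n ℝ} {r : ℝ} (hr : specRad Z < r) :
    (r • (1 : Matrix n n ℝ) - Z).det ≠ 0 := by
  intro hdet
  have h0 : 0 ≤ specRad Z := fold_max_nonneg _
  have hrpos : 0 < r := lt_of_le_of_lt h0 hr
  have heval : Z.charpoly.eval r = 0 := by rw [charpoly_eval', hdet]
  have hmem : (algebraMap ℝ ℂ r) ∈ (Z.charpoly.map (algebraMap ℝ ℂ)).roots := by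
    rw [Polynomial.mem_roots ((Z.charpoly_monic.map _).ne_zero)]
    rw [Polynomial.IsRoot, Polynomial.eval_map, Polynomial.eval₂_at_apply, heval, map_zero]
  have : ‖algebraMap ℝ ℂ r‖ ≤ specRad Z :=
    le_fold_max (Multiset.mem_map_of_mem _ hmem)
  rw [show (algebraMap ℝ ℂ r) = (r : ℂ) from rfl, Complex.norm_real, Real.norm_eq_abs, abs_of_pos hrpos] at this
  exact absurd hr (not_lt.mpr this)

open Polynomial Filter Topology

/-- **Eigenvector centrality of evolved matrices.**
Let all blocks be nonnegative and let `p` be a nonnegative eigenvector of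
`M = fromBlocks U (∑ i, W i) (∑ j, Y j) Z` for an eigenvalue `r > ρ(Z)`.
Then the evolved matrix `M̂` has a nonnegative eigenvector `q` for `r` whose
restriction to the core entries `S` agrees with that of `p`: the eigenvector
centrality of the core is preserved under the evolution. -/
theorem eigencentrality_of_evolved_matrix
    {S T : Type*} [Fintype S] [Fintype T] [Nonempty S] [Nonempty T]
    [DecidableEq S] [DecidableEq T]
    (w y : ℕ) (hw : 0 < w) (hy : 0 < y)
    (U : Matrix S S ℝ) (Z : Matrix T T ℝ)
    (W : Fin w → Matrix S T ℝ) (Y : Fin y → Matrix T S ℝ)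
    (hU : ∀ s s', 0 ≤ U s s') (hZ : ∀ t t', 0 ≤ Z t t')
    (hW : ∀ i s t, 0 ≤ W i s t) (hY : ∀ j t s, 0 ≤ Y j t s)
    (Mhat : Matrix (S ⊕ ((Fin w × Fin y) × T)) (S ⊕ ((Fin w × Fin y) × T)) ℝ)
    (h1 : ∀ s s', Mhat (Sum.inl s) (Sum.inl s') = U s s')
    (h2 : ∀ s (i : Fin w) (j : Fin y) t,
      Mhat (Sum.inl s) (Sum.inr ((i, j), t)) = W i s t)
    (h3 : ∀ (i : Fin w) (j : Fin y) t s,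
      Mhat (Sum.inr ((i, j), t)) (Sum.inl s) = Y j t s)
    (h4 : ∀ (i : Fin w) (j : Fin y) t (i' : Fin w) (j' : Fin y) t',
      Mhat (Sum.inr ((i, j), t)) (Sum.inr ((i', j'), t'))
        = if (i, j) = (i', j') then Z t t' else 0)
    (r : ℝ) (hr : specRad Z < r)
    (p : S ⊕ T → ℝ) (hp : ∀ x, 0 ≤ p x)
    (hpe : (Matrix.fromBlocks U (∑ i, W i) (∑ j, Y j) Z) *ᵥ p = r • p) :
    ∃ q : S ⊕ ((Fin w × Fin y) × T) → ℝ,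
      (∀ x, 0 ≤ q x) ∧ Mhat *ᵥ q = r • q ∧ q ∘ Sum.inl = p ∘ Sum.inl := by
  have hr0 : 0 < r := lt_of_le_of_lt (fold_max_nonneg _) hr
  have hrdet : (r • (1 : Matrix T T ℝ) - Z).det ≠ 0 := det_ne_zero_of_specRad_lt hr
  set p₁ : S → ℝ := p ∘ Sum.inl with hp₁
  set p₂ : T → ℝ := p ∘ Sum.inr with hp₂
  have hpelim : p = Sum.elim p₁ p₂ := funext fun x => by cases x <;> rfl
  rw [hpelim, Matrix.fromBlocks_mulVec] at hpe
  have E1 : U *ᵥ p₁ + (∑ i, W i) *ᵥ p₂ = r • p₁ := by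
    funext s
    have := congrFun hpe (Sum.inl s)
    simpa using this
  have E2 : (∑ j, Y j) *ᵥ p₁ + Z *ᵥ p₂ = r • p₂ := by
    funext t
    have := congrFun hpe (Sum.inr t)
    simpa using this
  -- basic positivity facts
  set c : Fin y → T → ℝ := fun j => Y j *ᵥ p₁ with hc
  have hc0 : ∀ j t, 0 ≤ c j t := fun j t =>
    Finset.sum_nonneg fun s _ => mul_nonneg (hY j t s) (hp _)
  set b : T → ℝ := (∑ j, Y j) *ᵥ p₁ with hb
  have hbsum : b = ∑ j, c j := by
    funext t
    simp only [hb, hc, Matrix.mulVec, dotProduct, Finset.sum_apply,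
      Matrix.sum_apply]
    rw [Finset.sum_comm]
    exact Finset.sum_congr rfl fun s _ => by rw [Finset.sum_mul]
  have hcb : ∀ j t, c j t ≤ b t := by
    intro j t
    rw [hbsum]
    simpa using Finset.single_le_sum (f := fun j => c j t)
      (fun i _ => hc0 i t) (Finset.mem_univ j)
  have hE2' : ∀ t, p₂ t = r⁻¹ * (b t + (Z *ᵥ p₂) t) := by
    intro t
    have := congrFun E2 t
    simp only [Pi.add_apply, Pi.smul_apply, smul_eq_mul] at this
    field_simp
    linarith [this]
  have hZmono : ∀ (u v : T → ℝ), (∀ t, u t ≤ v t) → ∀ t, (Z *ᵥ u) t ≤ (Z *ᵥ v) t := by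
    intro u v huv t
    exact Finset.sum_le_sum fun t' _ => mul_le_mul_of_nonneg_left (huv t') (hZ t t')
  -- the iteration
  set F : Fin y → (T → ℝ) → (T → ℝ) := fun j x => r⁻¹ • (c j + Z *ᵥ x) with hF
  set sseq : Fin y → ℕ → T → ℝ := fun j => fun n => (F j)^[n] (fun _ => 0) with hsseq
  have hseq_succ : ∀ j n, sseq j (n + 1) = F j (sseq j n) := by
    intro j n
    simp only [hsseq, Function.iterate_succ_apply']
  have hFmono : ∀ j (u v : T → ℝ), (∀ t, u t ≤ v t) → ∀ t, F j u t ≤ F j v t := by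
    intro j u v huv t
    simp only [hF, Pi.smul_apply, Pi.add_apply, smul_eq_mul]
    exact mul_le_mul_of_nonneg_left (by linarith [hZmono u v huv t]) (le_of_lt (inv_pos.mpr hr0))
  have hp₂0 : ∀ t, 0 ≤ p₂ t := fun t => hp _
  have hle_p₂ : ∀ j n t, sseq j n t ≤ p₂ t := by
    intro j n
    induction n with
    | zero => intro t; simpa [hsseq] using hp₂0 t
    | succ n ih =>
      intro t
      rw [hseq_succ]
      calc F j (sseq j n) t ≤ F j p₂ t := hFmono j _ _ ih t
        _ ≤ p₂ t := by
            simp only [hF, Pi.smul_apply, Pi.add_apply, smul_eq_mul]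
            rw [hE2' t]
            have := hcb j t
            have h3 := inv_pos.mpr hr0
            nlinarith [hcb j t]
  have hnonneg : ∀ j n t, 0 ≤ sseq j n t := by
    intro j n
    induction n with
    | zero => intro t; simp [hsseq]
    | succ n ih =>
      intro t
      rw [hseq_succ]
      simp only [hF, Pi.smul_apply, Pi.add_apply, smul_eq_mul]
      have hz : 0 ≤ (Z *ᵥ sseq j n) t :=
        Finset.sum_nonneg fun t' _ => mul_nonneg (hZ t t') (ih t')
      exact mul_nonneg (le_of_lt (inv_pos.mpr hr0)) (add_nonneg (hc0 j t) hz)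
  have hstep : ∀ j n t, sseq j n t ≤ sseq j (n + 1) t := by
    intro j n
    induction n with
    | zero =>
      intro t
      have h0 : sseq j 0 t = 0 := by simp [hsseq]
      rw [h0]
      exact hnonneg j 1 t
    | succ n ih =>
      intro t
      rw [hseq_succ, hseq_succ]
      exact hFmono j _ _ ih t
  have hmono : ∀ j t, Monotone fun n => sseq j n t := fun j t =>
    monotone_nat_of_le_succ fun n => hstep j n t
  -- the limit vectors
  set v : Fin y → T → ℝ := fun j t => ⨆ n, sseq j n t with hv
  have hbdd : ∀ j t, BddAbove (Set.range fun n => sseq j n t) :=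
    fun j t => ⟨p₂ t, fun x ⟨n, hn⟩ => hn ▸ hle_p₂ j n t⟩
  have htend : ∀ j t, Tendsto (fun n => sseq j n t) atTop (𝓝 (v j t)) :=
    fun j t => tendsto_atTop_ciSup (hmono j t) (hbdd j t)
  have hv0 : ∀ j t, 0 ≤ v j t := fun j t =>
    le_trans (hnonneg j 0 t) (le_ciSup (hbdd j t) 0)
  -- v satisfies the eigen recursion: c j + Z *ᵥ v j = r • v j
  have hveq : ∀ j t, c j t + (Z *ᵥ v j) t = r * v j t := by
    intro j t
    have ht1 : Tendsto (fun n => r * sseq j (n + 1) t) atTop (𝓝 (r * v j t)) :=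
      ((htend j t).comp (tendsto_add_atTop_nat 1)).const_mul r
    have ht2 : Tendsto (fun n => c j t + (Z *ᵥ sseq j n) t) atTop
        (𝓝 (c j t + (Z *ᵥ v j) t)) := by
      apply Tendsto.const_add
      exact tendsto_finset_sum _ fun t' _ => (htend j t').const_mul (Z t t')
    have heq : (fun n => r * sseq j (n + 1) t) = fun n => c j t + (Z *ᵥ sseq j n) t := by
      funext n
      rw [hseq_succ]
      simp only [hF, Pi.smul_apply, Pi.add_apply, smul_eq_mul]
      field_simp
    rw [heq] at ht1
    exact tendsto_nhds_unique ht2 ht1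
  -- the sums of v j equal p₂
  have hsumv : ∑ j, v j = p₂ := by
    set A : Matrix T T ℝ := r • (1 : Matrix T T ℝ) - Z with hA
    have hmul : ∀ x : T → ℝ, A *ᵥ x = r • x - Z *ᵥ x := by
      intro x
      rw [hA, Matrix.sub_mulVec, Matrix.smul_mulVec, Matrix.one_mulVec]
    have h1' : A *ᵥ (∑ j, v j) = b := by
      rw [hmul]
      funext t
      simp only [Pi.sub_apply, Pi.smul_apply, smul_eq_mul, hbsum, Finset.sum_apply]
      have hZs : (Z *ᵥ ∑ j, v j) t = ∑ j, (Z *ᵥ v j) t := by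
        simp only [Matrix.mulVec, dotProduct, Finset.sum_apply]
        rw [Finset.sum_comm]
        exact Finset.sum_congr rfl fun t' _ => by rw [Finset.mul_sum]
      rw [hZs, Finset.mul_sum, ← Finset.sum_sub_distrib]
      exact Finset.sum_congr rfl fun j _ => by linarith [hveq j t]
    have h2' : A *ᵥ p₂ = b := by
      rw [hmul]
      funext t
      have := hE2' t
      simp only [Pi.sub_apply, Pi.smul_apply, smul_eq_mul]
      have hrne : r ≠ 0 := ne_of_gt hr0
      field_simp at this
      linarith [this]
    have hinj : Function.Injective (A.mulVec) :=
      Matrix.mulVec_injective_iff_isUnit.mpr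
        ((Matrix.isUnit_iff_isUnit_det A).mpr (isUnit_iff_ne_zero.mpr hrdet))
    exact hinj (h1'.trans h2'.symm)
  -- assemble q
  refine ⟨Sum.elim p₁ (fun x => v x.1.2 x.2), ?_, ?_, rfl⟩
  · rintro (s | ⟨⟨i, j⟩, t⟩)
    · exact hp _
    · exact hv0 j t
  · funext x
    cases x with
    | inl s =>
      have key : ∑ x : (Fin w × Fin y) × T, Mhat (Sum.inl s) (Sum.inr x) * v x.1.2 x.2
          = ((∑ i, W i) *ᵥ p₂) s := by
        calc ∑ x : (Fin w × Fin y) × T, Mhat (Sum.inl s) (Sum.inr x) * v x.1.2 x.2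
            = ∑ i, ∑ j, ∑ t, W i s t * v j t := by
              rw [Fintype.sum_prod_type, Fintype.sum_prod_type]
              exact Finset.sum_congr rfl fun i _ => Finset.sum_congr rfl fun j _ =>
                Finset.sum_congr rfl fun t _ => by rw [h2 s i j t]
          _ = ∑ i, ∑ t, W i s t * p₂ t := by
              refine Finset.sum_congr rfl fun i _ => ?_
              rw [Finset.sum_comm]
              refine Finset.sum_congr rfl fun t _ => ?_
              rw [← Finset.mul_sum, ← hsumv]
              simp [Finset.sum_apply]
          _ = ((∑ i, W i) *ᵥ p₂) s := by
              simp only [Matrix.mulVec, dotProduct, Matrix.sum_apply,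
                Finset.sum_mul]
              rw [Finset.sum_comm]
      have lhs : (Mhat *ᵥ Sum.elim p₁ fun x => v x.1.2 x.2) (Sum.inl s)
          = (U *ᵥ p₁) s + ((∑ i, W i) *ᵥ p₂) s := by
        simp only [Matrix.mulVec, dotProduct, Fintype.sum_sum_type,
          Sum.elim_inl, Sum.elim_inr] at key ⊢
        rw [Finset.sum_congr rfl fun s' _ => by rw [h1 s s'], key]
      rw [lhs]
      have := congrFun E1 s
      simp only [Pi.add_apply, Pi.smul_apply, smul_eq_mul] at this ⊢
      rw [this]
      rfl
    | inr x =>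
      obtain ⟨⟨i, j⟩, t⟩ := x
      have key : ∑ x : (Fin w × Fin y) × T,
          Mhat (Sum.inr ((i, j), t)) (Sum.inr x) * v x.1.2 x.2 = (Z *ᵥ v j) t := by
        calc ∑ x : (Fin w × Fin y) × T,
              Mhat (Sum.inr ((i, j), t)) (Sum.inr x) * v x.1.2 x.2
            = ∑ a : Fin w × Fin y, ∑ t',
              (if (i, j) = a then Z t t' else 0) * v a.2 t' := by
              rw [Fintype.sum_prod_type]
              exact Finset.sum_congr rfl fun a _ => Finset.sum_congr rfl fun t' _ => by
                rw [h4 i j t a.1 a.2 t']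
          _ = ∑ a : Fin w × Fin y,
              (if (i, j) = a then ∑ t', Z t t' * v a.2 t' else 0) := by
              refine Finset.sum_congr rfl fun a _ => ?_
              by_cases h : (i, j) = a <;> simp [h]
          _ = (Z *ᵥ v j) t := by
              rw [Finset.sum_ite_eq]
              simp [Matrix.mulVec, dotProduct]
      have lhs : (Mhat *ᵥ Sum.elim p₁ fun x => v x.1.2 x.2) (Sum.inr ((i, j), t))
          = c j t + (Z *ᵥ v j) t := by
        simp only [Matrix.mulVec, dotProduct, Fintype.sum_sum_type,
          Sum.elim_inl, Sum.elim_inr] at key ⊢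
        rw [Finset.sum_congr rfl fun s _ => by rw [h3 i j t s], key]
        rfl
      rw [lhs]
      simp only [Pi.smul_apply, Sum.elim_inr, smul_eq_mul]
      exact hveq j t
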